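/- Let I ⊆ ℝ be an interval and A : I → gl(ℝ⁶) a differentiable curve with A(t) ∈ 𝔰𝔭(ℝ⁶) for all t, solving the bracket flow A′(t) = −(½ tr(S_{A(t)}²) + ¼ (tr(J A(t)))²)·A(t) + ½[A(t), [A(t), A(t)ᵗ]] + ½[A(t), S_{A(t)} ∘₆ S_{A(t)}]. Then t ↦ |A(t)|² is nonincreasing on I; in particular |A(t)| ≤ |A(t₀)| for all t₀ ≤ t in I, so the solution stays bounded (and hence cannot blow up in finite forward time). Moreover, if at some t ∈ I the derivative d/dt |A(t)|² vanishes, then A(t)ᵗ = −A(t) and tr(J A(t)) = 0. -/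

import Mathlib

open Matrix BigOperators

noncomputable section

abbrev M6 : Type := Matrix (Fin 6) (Fin 6) ℝ
abbrev M7 : Type := Matrix (Fin 7) (Fin 7) ℝ

/-- The canonical almost complex structure `J` on `ℝ⁶`:
`Je₁ = e₂, Je₂ = −e₁, Je₃ = e₄, Je₄ = −e₃, Je₅ = e₆, Je₆ = −e₅` (0-based indices). -/
def J6 : M6 := Matrix.of fun i j =>
  if (i = 1 ∧ j = 0) ∨ (i = 3 ∧ j = 2) ∨ (i = 5 ∧ j = 4) then 1
  else if (i = 0 ∧ j = 1) ∨ (i = 2 ∧ j = 3) ∨ (i = 4 ∧ j = 5) then -1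
  else 0

/-- `A ∈ 𝔰𝔭(ℝ⁶)` iff `AJ + JAᵗ = 0`. -/
def inSp (A : M6) : Prop := A * J6 + J6 * Aᵀ = 0

/-- The symmetric part `S_A = ½(A + Aᵗ)`. -/
def symPart (A : M6) : M6 := (1/2 : ℝ) • (A + Aᵀ)

/-- Frobenius inner product `⟨X,Y⟩ = tr(XYᵗ)`. -/
def mdot {n : ℕ} (X Y : Matrix (Fin n) (Fin n) ℝ) : ℝ := (X * Yᵀ).trace

/-- Commutator `[X,Y] = XY − YX`. -/
def mcomm {n : ℕ} (X Y : Matrix (Fin n) (Fin n) ℝ) : Matrix (Fin n) (Fin n) ℝ := X * Y - Y * X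

/-- Kronecker delta. -/
def kdelta {n : ℕ} (x y : Fin n) : ℝ := if x = y then 1 else 0

/-- The totally antisymmetric 3-tensor `e^a ∧ e^b ∧ e^c` evaluated on `(e_i, e_j, e_k)`. -/
def alt3 {n : ℕ} (a b c i j k : Fin n) : ℝ :=
  Matrix.det !![kdelta a i, kdelta a j, kdelta a k;
                kdelta b i, kdelta b j, kdelta b k;
                kdelta c i, kdelta c j, kdelta c k]

/-- `ρ⁺ = e¹³⁵ − e¹⁴⁶ − e²⁴⁵ − e²³⁶` (here written with 0-based indices). -/
def rhoP (i j k : Fin 6) : ℝ :=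
  alt3 0 2 4 i j k - alt3 0 3 5 i j k - alt3 1 3 4 i j k - alt3 1 2 5 i j k

/-- `(h ∘₆ k)_{ab} = Σ_{m,n,p,q} h_{mn} k_{pq} ρ⁺_{mpa} ρ⁺_{nqb}`. -/
def circ6 (h k : M6) : M6 :=
  Matrix.of fun a b => ∑ m, ∑ n, ∑ p, ∑ q, h m n * k p q * rhoP m p a * rhoP n q b

/-- The bracket-flow vector field of the Laplacian coflow. -/
def Fflow (A : M6) : M6 :=
  (-((1/2 : ℝ) * (symPart A * symPart A).trace + (1/4 : ℝ) * ((J6 * A).trace)^2)) • A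
  + (1/2 : ℝ) • mcomm A (mcomm A Aᵀ)
  + (1/2 : ℝ) • mcomm A (circ6 (symPart A) (symPart A))

/-!
Along the flow, `d/dt |A|² = 2⟨F(A), A⟩`. Write `S` for the symmetric part of `A`,
`C = [A, Aᵀ]` and `Q = S ∘₆ S`. Since `ad A` and `ad Aᵀ` are adjoint, the bracket terms
contribute `-½|C|² - ½⟨Q, C⟩`; since `A ∈ 𝔰𝔭(ℝ⁶)` makes `S` anticommute with `J`, one has
`|Q|² = 4|S|⁴ - 8|S²|²`. Completing the square and using `|A|² = |S|² + |A - S|²` gives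
`⟨F(A), A⟩ = -(¼ tr(JA)² |A|² + ½ |S|² |A - S|² + ½ |C + ½ Q|² + |S²|²) ≤ 0`.
If it vanishes, then `S² = 0`, hence `S = 0`, and `tr(JA)² |A|² = 0`.
-/

section Frobenius

variable {n : ℕ}

lemma mdot_eq_sum (X Y : Matrix (Fin n) (Fin n) ℝ) :
    mdot X Y = ∑ i, ∑ j, X i j * Y i j := by
  simp [mdot, Matrix.trace, Matrix.mul_apply]

lemma mdot_comm (X Y : Matrix (Fin n) (Fin n) ℝ) : mdot X Y = mdot Y X := by
  rw [mdot, mdot, ← Matrix.trace_transpose, Matrix.transpose_mul, Matrix.transpose_transpose]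

lemma mdot_self_nonneg (X : Matrix (Fin n) (Fin n) ℝ) : 0 ≤ mdot X X := by
  simpa [mdot] using (Matrix.posSemidef_self_mul_conjTranspose X).trace_nonneg

lemma mdot_self_eq_zero {X : Matrix (Fin n) (Fin n) ℝ} : mdot X X = 0 ↔ X = 0 := by
  simpa [mdot] using Matrix.trace_mul_conjTranspose_self_eq_zero_iff (A := X)

lemma mdot_add_left (X Y Z : Matrix (Fin n) (Fin n) ℝ) :
    mdot (X + Y) Z = mdot X Z + mdot Y Z := by
  simp only [mdot, Matrix.add_mul, Matrix.trace_add]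

lemma mdot_smul_left (c : ℝ) (X Y : Matrix (Fin n) (Fin n) ℝ) :
    mdot (c • X) Y = c * mdot X Y := by
  simp only [mdot, Matrix.smul_mul, Matrix.trace_smul, smul_eq_mul]

lemma mdot_smul_right (c : ℝ) (X Y : Matrix (Fin n) (Fin n) ℝ) :
    mdot X (c • Y) = c * mdot X Y := by
  rw [mdot_comm, mdot_smul_left, mdot_comm]

lemma mdot_add_add_self (X Y : Matrix (Fin n) (Fin n) ℝ) :
    mdot (X + Y) (X + Y) = mdot X X + 2 * mdot X Y + mdot Y Y := by
  rw [mdot_add_left, mdot_comm X, mdot_comm Y, mdot_add_left, mdot_add_left, mdot_comm Y X]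
  ring

lemma mdot_mcomm_self (A X : Matrix (Fin n) (Fin n) ℝ) :
    mdot (mcomm A X) A = -mdot X (mcomm A Aᵀ) := by
  simp only [mdot, mcomm, Matrix.transpose_sub, Matrix.transpose_mul, Matrix.transpose_transpose,
    Matrix.sub_mul, Matrix.mul_sub, Matrix.trace_sub]
  rw [Matrix.trace_mul_comm (A * X), ← Matrix.mul_assoc, Matrix.trace_mul_comm (Aᵀ * A),
    Matrix.mul_assoc X A]
  ring

lemma hasDerivAt_mdot_self {A : ℝ → Matrix (Fin n) (Fin n) ℝ} {V : Matrix (Fin n) (Fin n) ℝ}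
    {t : ℝ} (hA : ∀ i j, HasDerivAt (fun s => A s i j) (V i j) t) :
    HasDerivAt (fun s => mdot (A s) (A s)) (2 * mdot V (A t)) t := by
  simp only [mdot_eq_sum, Finset.mul_sum]
  exact HasDerivAt.fun_sum fun i _ => HasDerivAt.fun_sum fun j _ =>
    ((hA i j).fun_mul (hA i j)).congr_deriv (by ring)

end Frobenius

lemma J6_mul_J6 : J6 * J6 = -1 := by
  ext i j
  fin_cases i <;> fin_cases j <;> simp [J6, Matrix.mul_apply]

lemma symPart_transpose (A : M6) : (symPart A)ᵀ = symPart A := by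
  simp [symPart, add_comm]

lemma transpose_eq_J6_mul_mul_J6 {A : M6} (hA : inSp A) : Aᵀ = J6 * A * J6 := by
  have h := congrArg (J6 * ·) hA
  simp only [Matrix.mul_add, ← Matrix.mul_assoc, J6_mul_J6, Matrix.neg_mul, Matrix.one_mul,
    Matrix.mul_zero] at h
  exact (add_neg_eq_zero.mp h).symm

lemma J6_mul_symPart_mul_J6 {A : M6} (hA : inSp A) : J6 * symPart A * J6 = symPart A := by
  have hJAJ : J6 * Aᵀ * J6 = A := by
    rw [transpose_eq_J6_mul_mul_J6 hA, ← Matrix.mul_assoc, ← Matrix.mul_assoc, J6_mul_J6,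
      Matrix.mul_assoc, J6_mul_J6]
    simp
  rw [symPart, Matrix.mul_smul, Matrix.smul_mul, Matrix.mul_add, Matrix.add_mul, hJAJ,
    ← transpose_eq_J6_mul_mul_J6 hA, add_comm]

lemma sum_rhoP_mul (f : Fin 6 → Fin 6 → ℝ) (a : Fin 6) :
    ∑ m, ∑ p, rhoP m p a * f m p =
      ![f 2 4 - f 3 5 - f 4 2 + f 5 3, -f 2 5 - f 3 4 + f 4 3 + f 5 2,
        -f 0 4 + f 1 5 + f 4 0 - f 5 1, f 0 5 + f 1 4 - f 4 1 - f 5 0,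
        f 0 2 - f 1 3 - f 2 0 + f 3 1, -f 0 3 - f 1 2 + f 2 1 + f 3 0] a := by
  fin_cases a <;> simp [Fin.sum_univ_six, rhoP, alt3, kdelta, Matrix.det_fin_three] <;> ring

lemma circ6_apply (h k : M6) (a b : Fin 6) :
    circ6 h k a b = ∑ m, ∑ p, rhoP m p a * ∑ n, ∑ q, rhoP n q b * (h m n * k p q) := by
  simp only [circ6, Matrix.of_apply, Finset.mul_sum]
  refine Finset.sum_congr rfl fun m _ => ?_
  rw [Finset.sum_comm]
  exact Finset.sum_congr rfl fun p _ => Finset.sum_congr rfl fun n _ =>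
    Finset.sum_congr rfl fun q _ => by ring

def antiJSym (a b c d e f g h k l m n : ℝ) : M6 :=
  !![a, b, c, d, e, f; b, -a, d, -c, f, -e; c, d, g, h, k, l;
     d, -c, h, -g, l, -k; e, f, k, l, m, n; f, -e, l, -k, n, -m]

lemma eq_antiJSym {S : M6} (hS : Sᵀ = S) (hJ : J6 * S * J6 = S) :
    S = antiJSym (S 0 0) (S 0 1) (S 0 2) (S 0 3) (S 0 4) (S 0 5)
      (S 2 2) (S 2 3) (S 2 4) (S 2 5) (S 4 4) (S 4 5) := by
  rw [← Matrix.ext_iff] at hS hJ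
  simp only [Fin.forall_fin_succ, IsEmpty.forall_iff, and_true] at hS hJ
  simp [J6, Matrix.mul_apply] at hS hJ
  casesm* _ ∧ _
  ext i j
  fin_cases i <;> fin_cases j <;>
    simp only [Fin.reduceFinMk, antiJSym, Matrix.of_apply, Matrix.cons_val] <;> linarith

lemma mdot_antiJSym (a b c d e f g h k l m n a' b' c' d' e' f' g' h' k' l' m' n' : ℝ) :
    mdot (antiJSym a b c d e f g h k l m n) (antiJSym a' b' c' d' e' f' g' h' k' l' m' n') =
      2 * (a * a' + b * b' + g * g' + h * h' + m * m' + n * n')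
      + 4 * (c * c' + d * d' + e * e' + f * f' + k * k' + l * l') := by
  simp only [mdot_eq_sum, Fin.sum_univ_six, antiJSym, Matrix.of_apply, Matrix.cons_val]
  ring

-- `∘₆` maps this family into itself, which reduces the quartic identity below to a
-- polynomial identity in twelve variables.
lemma circ6_antiJSym (a b c d e f g h k l m n : ℝ) :
    circ6 (antiJSym a b c d e f g h k l m n) (antiJSym a b c d e f g h k l m n) =
      (4 : ℝ) • antiJSym (l ^ 2 - k ^ 2 - h * n + g * m) (2 * k * l - h * m - g * n)
        (e * k - f * l + d * n - c * m) (d * m + c * n - f * k - e * l)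
        (f * h - e * g - d * l + c * k) (f * g + e * h - d * k - c * l)
        (f ^ 2 - e ^ 2 - b * n + a * m) (2 * e * f - b * m - a * n)
        (c * e - d * f + b * l - a * k) (b * k + a * l - d * e - c * f)
        (d ^ 2 - c ^ 2 - b * h + a * g) (2 * c * d - b * g - a * h) := by
  ext i j
  simp only [circ6_apply, sum_rhoP_mul]
  fin_cases i <;> fin_cases j <;>
    simp only [Fin.reduceFinMk, antiJSym, Matrix.of_apply, Matrix.cons_val, Matrix.smul_apply,
      smul_eq_mul] <;> ring

lemma mdot_circ6_antiJSym (a b c d e f g h k l m n : ℝ) :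
    let S := antiJSym a b c d e f g h k l m n
    mdot (circ6 S S) (circ6 S S) = 4 * mdot S S ^ 2 - 8 * mdot (S * S) (S * S) := by
  simp only [circ6_antiJSym, mdot_smul_left, mdot_smul_right, mdot_antiJSym]
  simp only [mdot_eq_sum, Fin.sum_univ_six, Matrix.mul_apply, antiJSym, Matrix.of_apply,
    Matrix.cons_val]
  ring

lemma mdot_circ6_self {S : M6} (hS : Sᵀ = S) (hJ : J6 * S * J6 = S) :
    mdot (circ6 S S) (circ6 S S) = 4 * mdot S S ^ 2 - 8 * mdot (S * S) (S * S) := by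
  rw [eq_antiJSym hS hJ]
  exact mdot_circ6_antiJSym ..

lemma mdot_symPart_sub_symPart (A : M6) : mdot (symPart A) (A - symPart A) = 0 := by
  have hK : A - symPart A = (1/2 : ℝ) • (A - Aᵀ) := by
    rw [symPart]; module
  have hSA : (symPart A * Aᵀ).trace = (symPart A * A).trace := by
    rw [← Matrix.trace_transpose, Matrix.transpose_mul, Matrix.transpose_transpose,
      symPart_transpose, Matrix.trace_mul_comm]
  rw [hK, mdot_smul_right, mdot, Matrix.transpose_sub, Matrix.transpose_transpose,
    Matrix.mul_sub, Matrix.trace_sub, hSA, sub_self, mul_zero]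

lemma mdot_Fflow_self {A : M6} (hA : inSp A) :
    mdot (Fflow A) A =
      -((1/4) * (J6 * A).trace ^ 2 * mdot A A
        + (1/2) * mdot (symPart A) (symPart A) * mdot (A - symPart A) (A - symPart A)
        + (1/2) * mdot (mcomm A Aᵀ + (1/2 : ℝ) • circ6 (symPart A) (symPart A))
            (mcomm A Aᵀ + (1/2 : ℝ) • circ6 (symPart A) (symPart A))
        + mdot (symPart A * symPart A) (symPart A * symPart A)) := by
  have hcirc := mdot_circ6_self (symPart_transpose A) (J6_mul_symPart_mul_J6 hA)
  set S := symPart A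
  have hnorm : mdot A A = mdot S S + mdot (A - S) (A - S) := by
    conv_lhs => rw [← add_sub_cancel S A]
    rw [mdot_add_add_self, mdot_symPart_sub_symPart]
    ring
  have htr : (S * S).trace = mdot S S := by rw [mdot, symPart_transpose]
  rw [Fflow, mdot_add_left, mdot_add_left, mdot_smul_left, mdot_smul_left, mdot_smul_left,
    mdot_mcomm_self, mdot_mcomm_self, mdot_add_add_self, mdot_smul_right, mdot_smul_left,
    mdot_smul_right, mdot_comm (mcomm A Aᵀ) (circ6 S S), htr]
  linear_combination (-(1/2) * mdot S S) * hnorm + (1/8) * hcirc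

lemma mdot_Fflow_self_le {A : M6} (hA : inSp A) :
    mdot (Fflow A) A ≤ -((1/4) * (J6 * A).trace ^ 2 * mdot A A
      + mdot (symPart A * symPart A) (symPart A * symPart A)) := by
  rw [mdot_Fflow_self hA]
  have hskew := mul_nonneg (mul_nonneg (by norm_num : (0 : ℝ) ≤ 1/2)
    (mdot_self_nonneg (symPart A))) (mdot_self_nonneg (A - symPart A))
  have hbracket := mdot_self_nonneg (mcomm A Aᵀ + (1/2 : ℝ) • circ6 (symPart A) (symPart A))
  linarith

lemma mdot_Fflow_self_nonpos {A : M6} (hA : inSp A) : mdot (Fflow A) A ≤ 0 :=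
  (mdot_Fflow_self_le hA).trans <| neg_nonpos.mpr <|
    add_nonneg (mul_nonneg (by positivity) (mdot_self_nonneg _)) (mdot_self_nonneg _)

lemma transpose_eq_neg_and_trace_eq_zero_of_mdot_Fflow_self_eq_zero {A : M6} (hA : inSp A)
    (h : mdot (Fflow A) A = 0) : Aᵀ = -A ∧ (J6 * A).trace = 0 := by
  have hle := mdot_Fflow_self_le hA
  have hτ : 0 ≤ (J6 * A).trace ^ 2 * mdot A A := mul_nonneg (sq_nonneg _) (mdot_self_nonneg _)
  have hS2 := mdot_self_nonneg (symPart A * symPart A)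
  have hS : symPart A = 0 := by
    have hsq : symPart A * symPart A = 0 := mdot_self_eq_zero.mp (by linarith)
    rw [← mdot_self_eq_zero, mdot, symPart_transpose, hsq, Matrix.trace_zero]
  refine ⟨?_, ?_⟩
  · rw [symPart, smul_eq_zero] at hS
    exact eq_neg_of_add_eq_zero_right (hS.resolve_left (by norm_num))
  · rcases mul_eq_zero.mp (show (J6 * A).trace ^ 2 * mdot A A = 0 by linarith) with hτ0 | hA0
    · exact pow_eq_zero_iff two_ne_zero |>.mp hτ0
    · simp [mdot_self_eq_zero.mp hA0]

/-- Along any solution of the bracket flow in `𝔰𝔭(ℝ⁶)`, the squared norm `|A(t)|²`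
 is nonincreasing (so `|A(t)| ≤ |A(t₀)|` for `t₀ ≤ t`, and the solution stays bounded);
moreover if `d/dt |A(t)|² = 0` at some time `t`, then `A(t)ᵗ = −A(t)` and `tr(JA(t)) = 0`. -/
theorem norm_nonincreasing (I : Set ℝ) (hI : I.OrdConnected) (A : ℝ → M6)
    (hsp : ∀ t ∈ I, inSp (A t))
    (hflow : ∀ t ∈ I, ∀ i j, HasDerivAt (fun s => A s i j) (Fflow (A t) i j) t) :
    AntitoneOn (fun t => mdot (A t) (A t)) I ∧
    (∀ t₀ ∈ I, ∀ t ∈ I, t₀ ≤ t →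
      Real.sqrt (mdot (A t) (A t)) ≤ Real.sqrt (mdot (A t₀) (A t₀))) ∧
    (∀ t ∈ I, HasDerivAt (fun s => mdot (A s) (A s)) 0 t →
      (A t)ᵀ = -(A t) ∧ (J6 * A t).trace = 0) := by
  have hderiv (t : ℝ) (ht : t ∈ I) :
      HasDerivAt (fun s => mdot (A s) (A s)) (2 * mdot (Fflow (A t)) (A t)) t :=
    hasDerivAt_mdot_self (hflow t ht)
  have hanti : AntitoneOn (fun t => mdot (A t) (A t)) I :=
    antitoneOn_of_hasDerivWithinAt_nonpos hI.convex
      (fun t ht => (hderiv t ht).continuousAt.continuousWithinAt)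
      (fun t ht => (hderiv t (interior_subset ht)).hasDerivWithinAt)
      (fun t ht => mul_nonpos_of_nonneg_of_nonpos zero_le_two
        (mdot_Fflow_self_nonpos (hsp t (interior_subset ht))))
  refine ⟨hanti, fun t₀ ht₀ t ht hle => Real.sqrt_le_sqrt (hanti ht₀ ht hle), fun t ht h0 => ?_⟩
  have h2 : 2 * mdot (Fflow (A t)) (A t) = 0 := (hderiv t ht).unique h0
  exact transpose_eq_neg_and_trace_eq_zero_of_mdot_Fflow_self_eq_zero (hsp t ht) (by linarith)
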